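/- Let c_1,…,c_T ∈ [0, 1/2] be a sequence of abstention costs and let η > 0. Then the exponentially weighted forecaster with abstention satisfies R_T = ∑_{t=1}^T E[ℓ̂_t] − min_{i∈[N]} ∑_{t=1}^T ℓ_{t,i} ≤ (log N)/η + (η/8)·∑_{t=1}^T 1[1 − 2c_t < η]. -/

import Mathlib

noncomputable section

/-- Binary loss of expert `i` in round `t`: `1[y_{t,i} ≠ y_t]`. -/
def expertLoss {N : ℕ} (adv : ℕ → Fin N → ℝ) (y : ℕ → ℝ) (t : ℕ) (i : Fin N) : ℝ :=
  if adv t i = y t then 0 else 1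

/-- Normalized exponential weight `q_{t,i}` of expert `i` in round `t`. -/
def ewQ {N : ℕ} (η : ℝ) (adv : ℕ → Fin N → ℝ) (y : ℕ → ℝ) (t : ℕ) (i : Fin N) : ℝ :=
  Real.exp (-η * ∑ k ∈ Finset.range t, expertLoss adv y k i) /
    ∑ j, Real.exp (-η * ∑ k ∈ Finset.range t, expertLoss adv y k j)

/-- Aggregated prediction `p_t = ∑ i, q_{t,i} y_{t,i}`. -/
def aggP {N : ℕ} (η : ℝ) (adv : ℕ → Fin N → ℝ) (y : ℕ → ℝ) (t : ℕ) : ℝ :=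
  ∑ i, ewQ η adv y t i * adv t i

/-- Expected per-round loss of the exponentially weighted forecaster with abstention:
with `p* = max(p_t, 1 - p_t)`, `k* = 1[p_t ≥ 1/2]` and `α_t = 2(1 - p*)`, the expected
loss is `α_t · c_t + (1 - α_t) · 1[k* ≠ y_t]`. -/
def expAlgLoss {N : ℕ} (η : ℝ) (c : ℕ → ℝ) (adv : ℕ → Fin N → ℝ) (y : ℕ → ℝ) (t : ℕ) : ℝ :=
  let p := aggP η adv y t
  let pstar := max p (1 - p)
  let kstar : ℝ := if (1 : ℝ) / 2 ≤ p then 1 else 0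
  let α := 2 * (1 - pstar)
  α * c t + (1 - α) * (if kstar = y t then 0 else 1)

/-! Let `W_t = ∑ᵢ exp(-η L_{t,i})`, with `L_{t,i}` the cumulative loss of expert `i` before
round `t`. Then `W_0 = N`, `log W_T ≥ -η minᵢ L_{T,i}` and `W_{t+1} / W_t = ∑ᵢ q_{t,i} e^{-η ℓ_{t,i}}`,
so the regret is at most `log N / η` plus the sum over rounds of the excess of the expected loss
over `-(1/η) log (W_{t+1} / W_t)`.
If `A` is the weight the forecaster puts on the experts that err in round `t`, the expected loss
is `2Ac` for `A ≤ 1/2` and `1 - 2(1 - A)(1 - c)` otherwise; in particular it is at most `A`, and by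
Hoeffding's lemma `A ≤ -(1/η) log (W_{t+1} / W_t) + η/8`. When `η ≤ 1 - 2c` the loss is even
`η`-mixable: `log x ≤ x - 1` together with `e^{-η} ≤ 1 - η + η²` and `e^η ≤ 1 + η + η²` removes
the `η/8`. -/

open Real Finset MeasureTheory ProbabilityTheory

theorem Real.exp_neg_le_one_sub_add_sq {x : ℝ} (hx : 0 ≤ x) : exp (-x) ≤ 1 - x + x ^ 2 := by
  rw [exp_neg, inv_le_iff_one_le_mul₀ (exp_pos x)]
  nlinarith [quadratic_le_exp_of_nonneg hx, pow_nonneg hx 3, pow_nonneg hx 4]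

theorem Real.exp_le_one_add_add_sq {x : ℝ} (hx0 : 0 ≤ x) (hx1 : x ≤ 1) :
    exp x ≤ 1 + x + x ^ 2 := by
  refine (exp_le_two_add_div_two_sub hx0 (by linarith)).trans ?_
  rw [div_le_iff₀ (by linarith)]
  nlinarith [mul_nonneg (pow_nonneg hx0 2) (sub_nonneg.2 hx1)]

/-- Hoeffding's lemma for a finitely supported distribution `q`. -/
theorem sum_mul_exp_le_of_mem_Icc {ι : Type*} [Fintype ι] {q x : ι → ℝ} (hq : ∀ i, 0 ≤ q i)
    (hq1 : ∑ i, q i = 1) {a b : ℝ} (hx : ∀ i, x i ∈ Set.Icc a b) (t : ℝ) :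
    ∑ i, q i * exp (t * x i) ≤ exp (t * ∑ i, q i * x i + (b - a) ^ 2 * t ^ 2 / 8) := by
  let _ : MeasurableSpace ι := ⊤
  have : DiscreteMeasurableSpace ι := ⟨fun _ => trivial⟩
  let p : PMF ι := PMF.ofFintype (fun i => ENNReal.ofReal (q i)) (by
    rw [← ENNReal.ofReal_sum_of_nonneg fun i _ => hq i, hq1, ENNReal.ofReal_one])
  have integral_eq (f : ι → ℝ) : ∫ i, f i ∂p.toMeasure = ∑ i, q i * f i := by
    simp [p, PMF.integral_eq_sum, ENNReal.toReal_ofReal (hq _)]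
  have hoeffding := (hasSubgaussianMGF_of_mem_Icc (μ := p.toMeasure) (X := x)
    (measurable_of_countable x).aemeasurable (ae_of_all _ hx)).mgf_le t
  rw [mgf, integral_eq, integral_eq] at hoeffding
  have centre : ∑ i, q i * exp (t * (x i - ∑ j, q j * x j))
      = exp (-(t * ∑ j, q j * x j)) * ∑ i, q i * exp (t * x i) := by
    rw [mul_sum]
    refine sum_congr rfl fun i _ => ?_
    rw [mul_sub, sub_eq_add_neg, exp_add]
    ring
  rw [centre, ← le_div_iff₀' (exp_pos _), div_eq_mul_inv, ← exp_neg, neg_neg, ← exp_add]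
    at hoeffding
  refine hoeffding.trans_eq (congrArg exp ?_)
  push_cast
  rw [norm_eq_abs, div_pow, sq_abs]
  ring

theorem sum_mul_exp_neg_mul_of_binary {ι : Type*} [Fintype ι] {q x : ι → ℝ}
    (hq1 : ∑ i, q i = 1) (hx : ∀ i, x i = 0 ∨ x i = 1) (η : ℝ) :
    ∑ i, q i * exp (-η * x i) = 1 - ∑ i, q i * x i + (∑ i, q i * x i) * exp (-η) := by
  have hterm (i : ι) : q i * exp (-η * x i) = q i - q i * x i + q i * x i * exp (-η) := by
    rcases hx i with h | h <;> simp [h]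
  simp only [hterm, sum_add_distrib, sum_sub_distrib, ← sum_mul, hq1]

section ExponentialWeights

variable {ι : Type*} [Fintype ι] (η : ℝ) (ℓ : ℕ → ι → ℝ)

def cumLoss (t : ℕ) (i : ι) : ℝ := ∑ k ∈ range t, ℓ k i

def potential (t : ℕ) : ℝ := ∑ i, exp (-η * cumLoss ℓ t i)

def expWeight (t : ℕ) (i : ι) : ℝ := exp (-η * cumLoss ℓ t i) / potential η ℓ t

theorem potential_pos [Nonempty ι] (t : ℕ) : 0 < potential η ℓ t :=
  sum_pos (fun _ _ => exp_pos _) univ_nonempty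

theorem potential_zero : potential η ℓ 0 = Fintype.card ι := by
  simp [potential, cumLoss]

theorem expWeight_nonneg [Nonempty ι] (t : ℕ) (i : ι) : 0 ≤ expWeight η ℓ t i :=
  div_nonneg (exp_pos _).le (potential_pos η ℓ t).le

theorem sum_expWeight [Nonempty ι] (t : ℕ) : ∑ i, expWeight η ℓ t i = 1 := by
  simp only [expWeight]
  rw [← sum_div, ← potential, div_self (potential_pos η ℓ t).ne']

theorem sum_expWeight_mul_exp_eq [Nonempty ι] (t : ℕ) :
    ∑ i, expWeight η ℓ t i * exp (-η * ℓ t i) = potential η ℓ (t + 1) / potential η ℓ t := by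
  simp only [expWeight, div_mul_eq_mul_div, ← sum_div, ← exp_add]
  simp only [potential, cumLoss, sum_range_succ, mul_add]

theorem neg_mul_cumLoss_le_log_potential (t : ℕ) (i : ι) :
    -η * cumLoss ℓ t i ≤ log (potential η ℓ t) := by
  rw [← log_exp (-η * cumLoss ℓ t i)]
  exact log_le_log (exp_pos _)
    (single_le_sum (f := fun j => exp (-η * cumLoss ℓ t j)) (fun j _ => (exp_pos _).le)
      (mem_univ i))

theorem sum_sub_iInf_cumLoss_le [Nonempty ι] (hη : 0 < η) {loss r : ℕ → ℝ}
    (hloss : ∀ t, loss t ≤ -log (∑ i, expWeight η ℓ t i * exp (-η * ℓ t i)) / η + r t)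
    (T : ℕ) :
    ∑ t ∈ range T, loss t - ⨅ i, cumLoss ℓ T i
      ≤ log (Fintype.card ι) / η + ∑ t ∈ range T, r t := by
  have hlog (t : ℕ) : log (∑ i, expWeight η ℓ t i * exp (-η * ℓ t i))
      = log (potential η ℓ (t + 1)) - log (potential η ℓ t) := by
    rw [sum_expWeight_mul_exp_eq,
      log_div (potential_pos η ℓ (t + 1)).ne' (potential_pos η ℓ t).ne']
  have hbest : -log (potential η ℓ T) / η ≤ ⨅ i, cumLoss ℓ T i :=
    le_ciInf fun i => by
      rw [div_le_iff₀ hη]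
      linarith [neg_mul_cumLoss_le_log_potential η ℓ T i]
  have htelescope : ∑ t ∈ range T, loss t
      ≤ (log (Fintype.card ι) - log (potential η ℓ T)) / η + ∑ t ∈ range T, r t :=
    calc ∑ t ∈ range T, loss t
        ≤ ∑ t ∈ range T, (-(log (potential η ℓ (t + 1)) - log (potential η ℓ t)) / η + r t) :=
          sum_le_sum fun t _ => hlog t ▸ hloss t
      _ = _ := by
        rw [sum_add_distrib, ← sum_div, sum_neg_distrib,
          sum_range_sub (fun t => log (potential η ℓ t)), potential_zero]
        ring
  rw [neg_div] at hbest
  rw [sub_div] at htelescope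
  linarith

end ExponentialWeights

/-- The expected loss of the forecaster with abstention at cost `c` when the experts that err
carry total weight `A`. -/
def abstentionLoss (A c : ℝ) : ℝ := if A ≤ 1 / 2 then 2 * A * c else 1 - 2 * (1 - A) * (1 - c)

theorem abstentionLoss_le_self {A c : ℝ} (hA0 : 0 ≤ A) (hA1 : A ≤ 1) (hc : c ≤ 1 / 2) :
    abstentionLoss A c ≤ A := by
  unfold abstentionLoss
  split_ifs <;> nlinarith

theorem abstentionLoss_le_neg_log_div {A c η : ℝ} (hA0 : 0 ≤ A) (hA1 : A ≤ 1) (hc : 0 ≤ c)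
    (hη : 0 < η) (hηc : η ≤ 1 - 2 * c) :
    abstentionLoss A c ≤ -log (1 - A + A * exp (-η)) / η := by
  have hZ : 0 < 1 - A + A * exp (-η) := by
    nlinarith [exp_pos (-η), exp_le_one_iff.2 (neg_nonpos.2 hη.le)]
  rw [abstentionLoss, le_div_iff₀ hη]
  split_ifs with hA
  · have := log_le_sub_one_of_pos hZ
    nlinarith [mul_le_mul_of_nonneg_left (exp_neg_le_one_sub_add_sq hη.le) hA0,
      mul_nonneg hA0 (mul_nonneg hη.le (by linarith : 0 ≤ 1 - 2 * c - η))]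
  · have hfactor : 1 - A + A * exp (-η) = exp (-η) * (1 + (1 - A) * (exp η - 1)) := by
      rw [exp_neg]
      field_simp
      ring
    have hpos : 0 < 1 + (1 - A) * (exp η - 1) := by
      nlinarith [add_one_le_exp η]
    rw [hfactor, log_mul (exp_pos _).ne' hpos.ne', log_exp]
    have := log_le_sub_one_of_pos hpos
    nlinarith [mul_le_mul_of_nonneg_left (exp_le_one_add_add_sq hη.le (by linarith))
        (by linarith : 0 ≤ 1 - A),
      mul_nonneg (by linarith : 0 ≤ 1 - A) (mul_nonneg hη.le (by linarith : 0 ≤ 1 - 2 * c - η))]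

theorem expertLoss_eq_zero_or_one {N : ℕ} (adv : ℕ → Fin N → ℝ) (y : ℕ → ℝ) (t : ℕ) (i : Fin N) :
    expertLoss adv y t i = 0 ∨ expertLoss adv y t i = 1 := by
  unfold expertLoss
  split_ifs <;> simp

theorem expertLoss_of_binary {N : ℕ} {adv : ℕ → Fin N → ℝ} {y : ℕ → ℝ} {t : ℕ} {i : Fin N}
    (hadv : adv t i = 0 ∨ adv t i = 1) (hy : y t = 0 ∨ y t = 1) :
    expertLoss adv y t i = if y t = 0 then adv t i else 1 - adv t i := by
  unfold expertLoss
  rcases hadv with h | h <;> rcases hy with h' | h' <;> simp [h, h']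

theorem expAlgLoss_eq_abstentionLoss {N : ℕ} [Nonempty (Fin N)] (η : ℝ) (c : ℕ → ℝ)
    {adv : ℕ → Fin N → ℝ} {y : ℕ → ℝ} {t : ℕ} (hadv : ∀ i, adv t i = 0 ∨ adv t i = 1)
    (hy : y t = 0 ∨ y t = 1) :
    expAlgLoss η c adv y t
      = abstentionLoss (∑ i, ewQ η adv y t i * expertLoss adv y t i) (c t) := by
  have hq1 : ∑ i, ewQ η adv y t i = 1 := sum_expWeight η _ t
  have hA : ∑ i, ewQ η adv y t i * expertLoss adv y t i
      = if y t = 0 then aggP η adv y t else 1 - aggP η adv y t := by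
    simp only [expertLoss_of_binary (hadv _) hy]
    split_ifs
    · rfl
    · simp only [mul_sub, mul_one, sum_sub_distrib, hq1, aggP]
  rw [hA]
  dsimp only [expAlgLoss, abstentionLoss]
  generalize aggP η adv y t = p
  rcases lt_trichotomy p (1 / 2) with hp | rfl | hp
  · rw [max_eq_right (by linarith)]
    rcases hy with h | h <;> simp only [h] <;> split_ifs <;> first | ring1 | linarith | norm_num at *
  · -- at `p = 1/2` the forecaster abstains surely, so the tie-breaking of `k*` is irrelevant
    rcases hy with h | h <;> norm_num [h]
  · rw [max_eq_left (by linarith)]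
    rcases hy with h | h <;> simp only [h] <;> split_ifs <;> first | ring1 | linarith | norm_num at *

theorem expAlgLoss_le_neg_log_div_add {N : ℕ} [Nonempty (Fin N)] {η : ℝ} (hη : 0 < η) {c : ℕ → ℝ}
    {adv : ℕ → Fin N → ℝ} {y : ℕ → ℝ} {t : ℕ} (hc : c t ∈ Set.Icc (0 : ℝ) (1 / 2))
    (hadv : ∀ i, adv t i = 0 ∨ adv t i = 1) (hy : y t = 0 ∨ y t = 1) :
    expAlgLoss η c adv y t
      ≤ -log (∑ i, ewQ η adv y t i * exp (-η * expertLoss adv y t i)) / η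
        + η / 8 * (if 1 - 2 * c t < η then 1 else 0) := by
  have hq0 : ∀ i, 0 ≤ ewQ η adv y t i := expWeight_nonneg η _ t
  have hq1 : ∑ i, ewQ η adv y t i = 1 := sum_expWeight η _ t
  have hℓ : ∀ i, expertLoss adv y t i = 0 ∨ expertLoss adv y t i = 1 :=
    expertLoss_eq_zero_or_one adv y t
  have hℓ01 : ∀ i, expertLoss adv y t i ∈ Set.Icc (0 : ℝ) 1 := fun i => by
    rcases hℓ i with h | h <;> simp [h]
  set A := ∑ i, ewQ η adv y t i * expertLoss adv y t i
  have hA0 : 0 ≤ A := sum_nonneg fun i _ => mul_nonneg (hq0 i) (hℓ01 i).1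
  have hA1 : A ≤ 1 := hq1 ▸ sum_le_sum fun i _ => mul_le_of_le_one_right (hq0 i) (hℓ01 i).2
  rw [expAlgLoss_eq_abstentionLoss η c hadv hy]
  split_ifs with hcη
  · have hoeffding := sum_mul_exp_le_of_mem_Icc hq0 hq1 hℓ01 (-η)
    have hlog := log_le_log (sum_expWeight_mul_exp_eq η (expertLoss adv y) t ▸ div_pos
      (potential_pos η _ (t + 1)) (potential_pos η _ t)) hoeffding
    rw [log_exp] at hlog
    have : A - η / 8 ≤ -log (∑ i, ewQ η adv y t i * exp (-η * expertLoss adv y t i)) / η := by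
      rw [le_div_iff₀ hη]
      nlinarith
    linarith [abstentionLoss_le_self hA0 hA1 hc.2]
  · rw [sum_mul_exp_neg_mul_of_binary hq1 hℓ, mul_zero, add_zero]
    exact abstentionLoss_le_neg_log_div hA0 hA1 hc.1 hη (by linarith)

theorem abstention_changing_costs_general (N T : ℕ) (hN : 2 ≤ N) (c : ℕ → ℝ) (η : ℝ)
    (hc : ∀ t, c t ∈ Set.Icc (0 : ℝ) (1 / 2)) (hη0 : 0 < η)
    (adv : ℕ → Fin N → ℝ) (y : ℕ → ℝ)
    (hadv : ∀ t i, adv t i = 0 ∨ adv t i = 1) (hy : ∀ t, y t = 0 ∨ y t = 1) :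
    (∑ t ∈ Finset.range T, expAlgLoss η c adv y t)
        - ⨅ i : Fin N, ∑ t ∈ Finset.range T, expertLoss adv y t i
      ≤ Real.log N / η
          + (η / 8) * ∑ t ∈ Finset.range T, (if 1 - 2 * c t < η then (1 : ℝ) else 0) := by
  have : Nonempty (Fin N) := ⟨⟨0, by omega⟩⟩
  have regret := sum_sub_iInf_cumLoss_le η (expertLoss adv y) hη0
    (fun t => expAlgLoss_le_neg_log_div_add hη0 (hc t) (hadv t) (hy t)) T
  rwa [Fintype.card_fin, ← mul_sum] at regret

/-- Proposition 5: with a time-varying sequence of abstention costs `c_t ∈ [0, 1/2]`,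
the exponentially weighted forecaster with abstention satisfies
`R_T ≤ (log N)/η + (η/8)·∑_t 1[1 - 2c_t < η]`. -/
theorem abstention_changing_costs (N T : ℕ) (hN : 2 ≤ N) (hT : 1 ≤ T) (c : ℕ → ℝ) (η : ℝ)
    (hc : ∀ t, c t ∈ Set.Icc (0 : ℝ) (1 / 2)) (hη0 : 0 < η)
    (adv : ℕ → Fin N → ℝ) (y : ℕ → ℝ)
    (hadv : ∀ t i, adv t i = 0 ∨ adv t i = 1) (hy : ∀ t, y t = 0 ∨ y t = 1) :
    (∑ t ∈ Finset.range T, expAlgLoss η c adv y t)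
        - ⨅ i : Fin N, ∑ t ∈ Finset.range T, expertLoss adv y t i
      ≤ Real.log N / η
          + (η / 8) * ∑ t ∈ Finset.range T, (if 1 - 2 * c t < η then (1 : ℝ) else 0) :=
  abstention_changing_costs_general N T hN c η hc hη0 adv y hadv hy
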